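/- Let g ∈ L^∞(𝕋) satisfy g = conj(𝒪) · conj(α) · O⁻¹ a.e. on 𝕋, where α is an inner function and O, 𝒪 ∈ H² are outer. Then for every λ in the open unit disk 𝔻, both O·k_λ^α and O·k̃_λ^α belong to ker T_g. -/

import Mathlib

open MeasureTheory Complex
open scoped Real ComplexConjugate ENNReal

noncomputable section

namespace ToeplitzKernels

/-- We model the unit circle `𝕋` as `AddCircle (2 * π)`. -/
abbrev UnitCircle := AddCircle (2 * Real.pi)

instance : Fact (0 < 2 * Real.pi) := ⟨by positivity⟩

/-- The normalised Haar (arc-length) measure on the circle. -/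
abbrev muT : Measure UnitCircle := AddCircle.haarAddCircle

/-- `L²(𝕋)`. -/
abbrev L2T := Lp ℂ 2 muT

/-- The coordinate function `z` on the circle. -/
def zf : UnitCircle → ℂ := fun x => fourier 1 x

/-- A (plain) function belongs to `H²`: it is square integrable and all its Fourier
coefficients of negative index vanish. -/
def InH2 (f : UnitCircle → ℂ) : Prop :=
  MemLp f 2 muT ∧ ∀ n : ℤ, n < 0 → fourierCoeff f n = 0

/-- `H²` as a subset of `L²`. -/
def H2 : Set L2T :=
  {u | ∀ n : ℤ, n < 0 → fourierCoeff (u : UnitCircle → ℂ) n = 0}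

/-- A function belongs to `H^∞`: it is a bounded member of `H²`. -/
def InHinf (f : UnitCircle → ℂ) : Prop :=
  InH2 f ∧ MemLp f ⊤ muT

/-- `f` is outer: `f ∈ H²` and the closed linear span of `{zⁿ f : n ≥ 0}` in `L²` is `H²`. -/
def IsOuter (f : UnitCircle → ℂ) : Prop :=
  InH2 f ∧
    closure ((Submodule.span ℂ
        {u : L2T | ∃ n : ℕ, (u : UnitCircle → ℂ) =ᵐ[muT] fun x => zf x ^ n * f x} :
          Submodule ℂ L2T) : Set L2T) = H2

/-- `f` is inner: `f ∈ H²` (hence in `H^∞`) and `|f| = 1` a.e. on `𝕋`. -/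
def IsInner (f : UnitCircle → ℂ) : Prop :=
  InH2 f ∧ ∀ᵐ x ∂muT, ‖f x‖ = 1

/-- The kernel of the Toeplitz operator `T_g`, as a subset of `L²`: those `f ∈ H²` with
`P⁺(g f) = 0`, i.e. all Fourier coefficients of `g·f` of index `≥ 0` vanish. -/
def kerT (g : UnitCircle → ℂ) : Set L2T :=
  {u | u ∈ H2 ∧ ∀ n : ℤ, 0 ≤ n →
    fourierCoeff (fun x => g x * (u : UnitCircle → ℂ) x) n = 0}

/-- Membership of (the a.e. class of) a plain function in `ker T_g`. -/
def InKerT (g f : UnitCircle → ℂ) : Prop :=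
  InH2 f ∧ ∀ n : ℤ, 0 ≤ n → fourierCoeff (fun x => g x * f x) n = 0

/-- The model space `K_θ = ker T_{θ̄}`. -/
def modelSpace (θ : UnitCircle → ℂ) : Set L2T :=
  kerT fun x => conj (θ x)

/-- `f` is a maximal function of `ker T_g`: `f ∈ H²` and `g f = z̄ Ō` a.e. on `𝕋`
for some outer `O ∈ H²` (equivalently, `ker T_g` is the smallest Toeplitz kernel
containing `f`). -/
def IsMaximal (g f : UnitCircle → ℂ) : Prop :=
  InH2 f ∧ ∃ O : UnitCircle → ℂ, IsOuter O ∧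
    (fun x => g x * f x) =ᵐ[muT] fun x => conj (zf x) * conj (O x)

/-- The set `w·S ⊆ L²`, for a set `S ⊆ L²` of square-integrable functions. -/
def mulSet (w : UnitCircle → ℂ) (S : Set L2T) : Set L2T :=
  {u | ∃ v ∈ S, (u : UnitCircle → ℂ) =ᵐ[muT] fun x => w x * (v : UnitCircle → ℂ) x}

/-- `w·S ⊆ L²(𝕋)`. -/
def mulMapsIntoL2 (w : UnitCircle → ℂ) (S : Set L2T) : Prop :=
  ∀ v ∈ S, MemLp (fun x => w x * (v : UnitCircle → ℂ) x) 2 muT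

/-- `w⁻¹·S ⊆ L²(𝕋)`. -/
def invMulMapsIntoL2 (w : UnitCircle → ℂ) (S : Set L2T) : Prop :=
  ∀ v ∈ S, MemLp (fun x => (w x)⁻¹ * (v : UnitCircle → ℂ) x) 2 muT

/-- An outer function `O` is square-rigid if `ker T_{z̄ Ō / O} = ℂ · O`. -/
def IsSquareRigidOuter (O : UnitCircle → ℂ) : Prop :=
  kerT (fun x => conj (zf x) * conj (O x) / O x)
    = {u : L2T | ∃ c : ℂ, (u : UnitCircle → ℂ) =ᵐ[muT] fun x => c * O x}

/-- `w ∈ H²` is square-rigid if the outer factor of `w` is square-rigid. -/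
def IsSquareRigid (w : UnitCircle → ℂ) : Prop :=
  ∃ I O : UnitCircle → ℂ, IsInner I ∧ IsOuter O ∧
    (w =ᵐ[muT] fun x => I x * O x) ∧ IsSquareRigidOuter O

/-- The (linear) dimension of a subset of `L²` (the rank of its linear span). -/
def setDim (S : Set L2T) : Cardinal :=
  Module.rank ℂ (Submodule.span ℂ S)

/-- The value at a point `l` of the open unit disc of the holomorphic extension of a
function `f ∈ H²` on the boundary. -/
def diskValue (f : UnitCircle → ℂ) (l : ℂ) : ℂ :=
  ∑' n : ℕ, fourierCoeff f (n : ℤ) * l ^ n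

/-- The reproducing kernel `k_λ^θ = (1 - conj (θ(λ)) θ)/(1 - λ̄ z)` (boundary values). -/
def kFun (θ : UnitCircle → ℂ) (l : ℂ) : UnitCircle → ℂ :=
  fun x => (1 - conj (diskValue θ l) * θ x) / (1 - conj l * zf x)

/-- The conjugate kernel `k̃_λ^θ = (θ - θ(λ))/(z - λ)` (boundary values). -/
def ktFun (θ : UnitCircle → ℂ) (l : ℂ) : UnitCircle → ℂ :=
  fun x => (θ x - diskValue θ l) / (zf x - l)

/-- The conjugation `C_ḡ f = ḡ z̄ f̄` associated to a unimodular symbol `g`. -/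
def conjC (g f : UnitCircle → ℂ) : UnitCircle → ℂ :=
  fun x => conj (g x) * conj (zf x) * conj (f x)

/-- `α` is a finite Blaschke product with exactly `k` zeroes in `𝔻` (with multiplicity). -/
def IsFiniteBlaschke (α : UnitCircle → ℂ) (k : ℕ) : Prop :=
  ∃ (c : ℂ) (a : Fin k → ℂ), ‖c‖ = 1 ∧ (∀ i, ‖a i‖ < 1) ∧
    α =ᵐ[muT] fun x => c * ∏ i, (zf x - a i) / (1 - conj (a i) * zf x)

open scoped InnerProductSpace

-- ### helper lemmas

lemma norm_zf (x : UnitCircle) : ‖zf x‖ = 1 := Circle.norm_coe _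

lemma zf_mul_conj (x : UnitCircle) : zf x * conj (zf x) = 1 := by
  rw [mul_comm, Complex.conj_mul', norm_zf]
  norm_num

lemma fourierCoeff_congr_ae {f g : UnitCircle → ℂ} (h : f =ᵐ[muT] g) (n : ℤ) :
    fourierCoeff f n = fourierCoeff g n := by
  unfold fourierCoeff
  exact integral_congr_ae (h.mono fun x hx => by simp only [hx])

lemma fourierCoeff_conj (f : UnitCircle → ℂ) (n : ℤ) :
    fourierCoeff (fun x => conj (f x)) n = conj (fourierCoeff f (-n)) := by
  unfold fourierCoeff
  rw [← integral_conj]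
  congr 1; ext x
  simp [smul_eq_mul, neg_neg, map_mul, ← fourier_neg]

lemma fourierCoeff_fourier_mul (f : UnitCircle → ℂ) (m n : ℤ) :
    fourierCoeff (fun x => fourier m x * f x) n = fourierCoeff f (n - m) := by
  unfold fourierCoeff
  congr 1; ext x
  simp only [smul_eq_mul, ← mul_assoc]
  rw [← fourier_add]
  ring_nf

lemma fourierCoeff_zf_mul (f : UnitCircle → ℂ) (n : ℤ) :
    fourierCoeff (fun x => zf x * f x) n = fourierCoeff f (n - 1) := by
  simpa [zf] using fourierCoeff_fourier_mul f 1 n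

lemma integral_fourier (m : ℤ) :
    ∫ x : UnitCircle, fourier m x ∂muT = if m = 0 then 1 else 0 := by
  have h := orthonormal_iff_ite.mp (@orthonormal_fourier (2 * Real.pi) _) 0 m
  rw [L2.inner_def] at h
  rw [show (if m = 0 then (1:ℂ) else 0) = if (0:ℤ) = m then 1 else 0 by
    by_cases hm : m = 0 <;> simp [hm, eq_comm], ← h]
  apply integral_congr_ae
  filter_upwards [coeFn_fourierLp 2 (0 : ℤ), coeFn_fourierLp 2 m] with x h0 hm
  rw [h0, hm]
  simp [fourier_zero]

lemma fourierCoeff_const (c : ℂ) (n : ℤ) :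
    fourierCoeff (fun _ : UnitCircle => c) n = if n = 0 then c else 0 := by
  unfold fourierCoeff
  simp_rw [smul_eq_mul]
  rw [integral_mul_const, integral_fourier]
  by_cases hn : n = 0 <;> simp [hn]

lemma integrable_fourier_smul {f : UnitCircle → ℂ} (hf : Integrable f muT) (n : ℤ) :
    Integrable (fun x => fourier n x * f x) muT :=
  hf.bdd_mul (c := 1) (map_continuous (fourier n)).aestronglyMeasurable
    (Filter.Eventually.of_forall fun x => le_of_eq (Circle.norm_coe _))

lemma fourierCoeff_sub {f g : UnitCircle → ℂ} (hf : Integrable f muT)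
    (hg : Integrable g muT) (n : ℤ) :
    fourierCoeff (fun x => f x - g x) n = fourierCoeff f n - fourierCoeff g n := by
  unfold fourierCoeff
  simp_rw [smul_eq_mul, mul_sub]
  exact integral_sub (integrable_fourier_smul hf (-n)) (integrable_fourier_smul hg (-n))

lemma zf_pow (j : ℕ) (x : UnitCircle) : zf x ^ j = fourier (j : ℤ) x := by
  induction j with
  | zero => simp [fourier_zero]
  | succ k ih =>
      rw [pow_succ, ih, zf, ← fourier_add]
      norm_cast

/-- Parseval/convolution identity for Fourier coefficients of a product of two
square-integrable functions. -/
lemma fourierCoeff_mul (f h : UnitCircle → ℂ) (hf : MemLp f 2 muT)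
    (hh : MemLp h 2 muT) (n : ℤ) :
    fourierCoeff (fun x => h x * f x) n = ∑' k : ℤ, fourierCoeff h (n - k) * fourierCoeff f k := by
  set φ : UnitCircle → ℂ := fun x => conj (h x * fourier (-n) x) with hφdef
  have hφm : AEStronglyMeasurable φ muT := by
    exact (Complex.continuous_conj.comp_aestronglyMeasurable
      (hh.1.mul (fourier (-n)).continuous.aestronglyMeasurable))
  have hφ : MemLp φ 2 muT := by
    refine MemLp.of_le_mul (c := 1) hh hφm (Filter.Eventually.of_forall fun x => ?_)
    simp only [hφdef, norm_mul, RCLike.norm_conj]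
    have : ‖(fourier (-n) : C(UnitCircle, ℂ)) x‖ = 1 := Circle.norm_coe _
    rw [this, mul_one, one_mul]
  set φL : L2T := hφ.toLp φ
  set fL : L2T := hf.toLp f
  have key : ⟪φL, fL⟫_ℂ = fourierCoeff (fun x => h x * f x) n := by
    rw [L2.inner_def]
    unfold fourierCoeff
    apply integral_congr_ae
    filter_upwards [hφ.coeFn_toLp, hf.coeFn_toLp] with x h1 h2
    rw [h1, h2]
    simp only [hφdef, RCLike.inner_apply, starRingEnd_apply, star_star, smul_eq_mul]
    ring
  have repr_f : ∀ k : ℤ, fourierBasis.repr fL k = fourierCoeff f k := fun k => by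
    rw [fourierBasis_repr]; exact fourierCoeff_congr_ae hf.coeFn_toLp k
  have repr_φ : ∀ k : ℤ, fourierBasis.repr φL k = conj (fourierCoeff h (n - k)) := fun k => by
    rw [fourierBasis_repr]
    rw [fourierCoeff_congr_ae hφ.coeFn_toLp k]
    rw [fourierCoeff_conj]
    have : (fun x => h x * (fourier (-n) : C(UnitCircle, ℂ)) x)
        = fun x => (fourier (-n) : C(UnitCircle, ℂ)) x * h x := funext fun x => mul_comm _ _
    rw [this, fourierCoeff_fourier_mul]
    congr 2
    ring
  rw [← key, ← fourierBasis.tsum_inner_mul_inner φL fL]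
  refine tsum_congr fun k => ?_
  calc ⟪φL, fourierBasis k⟫_ℂ * ⟪fourierBasis k, fL⟫_ℂ
      = conj (fourierBasis.repr φL k) * fourierBasis.repr fL k := by
        rw [← inner_conj_symm, fourierBasis.repr_apply_apply, fourierBasis.repr_apply_apply]
    _ = fourierCoeff h (n - k) * fourierCoeff f k := by
        rw [repr_f, repr_φ, Complex.conj_conj]

/-- Negative Fourier coefficients of a product of two `H²` functions vanish. -/
lemma fourierCoeff_mul_neg {f h : UnitCircle → ℂ} (hf2 : MemLp f 2 muT)
    (hh2 : MemLp h 2 muT) (hf : ∀ n : ℤ, n < 0 → fourierCoeff f n = 0)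
    (hh : ∀ n : ℤ, n < 0 → fourierCoeff h n = 0) {n : ℤ} (hn : n < 0) :
    fourierCoeff (fun x => f x * h x) n = 0 := by
  rw [fourierCoeff_mul h f hh2 hf2 n]
  refine (tsum_congr fun k => ?_).trans tsum_zero
  by_cases hk : k < 0
  · rw [hh k hk, mul_zero]
  · rw [hf (n - k) (by omega), zero_mul]

lemma fourierCoeff_geom {a : ℂ} (ha : ‖a‖ < 1) (n : ℤ) :
    fourierCoeff (fun x => (1 - a * zf x)⁻¹) n = if 0 ≤ n then a ^ n.toNat else 0 := by
  have hsum : ∀ x : UnitCircle, (1 - a * zf x)⁻¹ = ∑' j : ℕ, a ^ j * fourier (j : ℤ) x := by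
    intro x
    have hn : ‖a * zf x‖ < 1 := by rw [norm_mul, norm_zf, mul_one]; exact ha
    rw [← tsum_geometric_of_norm_lt_one hn]
    congr 1; ext j
    rw [mul_pow, zf_pow]
  unfold fourierCoeff
  have : ∀ x : UnitCircle, fourier (-n) x • (1 - a * zf x)⁻¹
      = ∑' j : ℕ, fourier (-n) x * (a ^ j * fourier (j:ℤ) x) := by
    intro x
    rw [smul_eq_mul, hsum x]
    exact (tsum_mul_left (a := fourier (-n) x)).symm ▸ rfl
  simp_rw [this]
  rw [integral_tsum ?hmeas ?hbound]
  case hmeas =>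
    intro j
    exact (((map_continuous (fourier (-n))).mul
      (continuous_const.mul (map_continuous (fourier (j:ℤ))))).aestronglyMeasurable)
  case hbound =>
    have hb : ∀ j : ℕ, ∫⁻ x, ‖fourier (-n) x * (a ^ j * fourier (j:ℤ) x)‖₊ ∂muT
        = (‖a‖₊ : ℝ≥0∞) ^ j := by
      intro j
      have : ∀ x : UnitCircle, (‖fourier (-n) x * (a ^ j * fourier (j:ℤ) x)‖₊ : ℝ≥0∞)
          = (‖a‖₊ : ℝ≥0∞) ^ j := by
        intro x
        have : ‖fourier (-n) x * (a ^ j * fourier (j:ℤ) x)‖ = ‖a‖ ^ j := by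
          simp only [norm_mul, norm_pow]
          rw [show ‖fourier (-n) x‖ = 1 from Circle.norm_coe _,
            show ‖fourier (j:ℤ) x‖ = 1 from Circle.norm_coe _]
          ring
        rw [← ENNReal.coe_pow]
        congr 1
        ext
        simp [this, Circle.norm_coe]
      simp_rw [this]
      rw [lintegral_const]
      simp [measure_univ]
    rw [ne_eq]
    simp_rw [enorm_eq_nnnorm]
    simp_rw [hb]
    rw [ENNReal.tsum_geometric]
    have h1 : (‖a‖₊ : ℝ≥0∞) < 1 := by
      rw [← ENNReal.coe_one, ENNReal.coe_lt_coe, ← NNReal.coe_lt_coe]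
      simpa using ha
    simp only [ENNReal.inv_eq_top, tsub_eq_zero_iff_le, not_le]
    exact h1
  have hterm : ∀ j : ℕ, ∫ x, fourier (-n) x * (a ^ j * fourier (j:ℤ) x) ∂muT
      = if (j : ℤ) = n then a ^ j else 0 := by
    intro j
    have : ∀ x : UnitCircle, fourier (-n) x * (a ^ j * fourier (j:ℤ) x)
        = a ^ j * fourier ((j:ℤ) - n) x := by
      intro x
      rw [show (j:ℤ) - n = (j:ℤ) + -n from by ring, fourier_add]
      ring
    simp_rw [this]
    rw [integral_const_mul, integral_fourier]
    by_cases hj : (j:ℤ) = n <;> simp [hj, sub_eq_zero, hj]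
  simp_rw [hterm]
  by_cases hn : 0 ≤ n
  · rw [if_pos hn]
    have : ((n.toNat : ℤ)) = n := Int.toNat_of_nonneg hn
    rw [tsum_eq_single n.toNat]
    · simp [this]
    · intro j hj
      rw [if_neg]
      intro hc
      apply hj
      omega
  · rw [if_neg hn]
    have : ∀ j : ℕ, (if (j:ℤ) = n then a ^ j else 0) = 0 := fun j => if_neg (by omega)
    simp_rw [this, tsum_zero]


lemma one_sub_mul_zf_ne {a : ℂ} (ha : ‖a‖ < 1) (x : UnitCircle) : 1 - a * zf x ≠ 0 := by
  intro h
  have h1 : (1:ℂ) = a * zf x := by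
    have := sub_eq_zero.mp h
    exact this
  have : (1:ℝ) = ‖a‖ := by
    calc (1:ℝ) = ‖(1:ℂ)‖ := by simp
    _ = ‖a * zf x‖ := by rw [h1]
    _ = ‖a‖ := by rw [norm_mul, norm_zf, mul_one]
  linarith

lemma zf_sub_ne {a : ℂ} (ha : ‖a‖ < 1) (x : UnitCircle) : zf x - a ≠ 0 := by
  intro h
  have := sub_eq_zero.mp h
  rw [← this] at ha
  rw [norm_zf x] at ha
  exact lt_irrefl _ ha

lemma zf_continuous : Continuous zf := (fourier 1).continuous

lemma norm_one_sub_mul_zf (a : ℂ) (x : UnitCircle) :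
    1 - ‖a‖ ≤ ‖1 - a * zf x‖ := by
  have h := norm_sub_norm_le (1 : ℂ) (a * zf x)
  rw [norm_one, norm_mul, norm_zf, mul_one] at h
  exact h

lemma norm_zf_sub (a : ℂ) (x : UnitCircle) :
    1 - ‖a‖ ≤ ‖zf x - a‖ := by
  have h := norm_sub_norm_le (zf x) a
  rw [norm_zf] at h
  exact h

lemma norm_inv_le_of_le {z : ℂ} {b : ℝ} (hb : 0 < b) (h : b ≤ ‖z‖) :
    ‖z⁻¹‖ ≤ b⁻¹ := by
  rw [norm_inv]
  exact inv_anti₀ hb h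

/-- An outer function is nonzero almost everywhere. -/
lemma outer_ne_zero {O : UnitCircle → ℂ} (hO : IsOuter O) : ∀ᵐ x ∂muT, O x ≠ 0 := by
  have hm := hO.1.1.aestronglyMeasurable
  set O' := hm.mk O with hO'def
  have hOeq : O =ᵐ[muT] O' := hm.ae_eq_mk
  have hZ : MeasurableSet {x | O' x = 0} :=
    hm.stronglyMeasurable_mk.measurable (measurableSet_singleton 0)
  set Z := {x | O' x = 0} with hZdef
  set ν := muT.restrict Z with hνdef
  set V : Submodule ℂ L2T :=
    { carrier := {u : L2T | (u : UnitCircle → ℂ) =ᵐ[ν] 0}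
      add_mem' := by
        intro u v hu hv
        show ((u + v : L2T) : UnitCircle → ℂ) =ᵐ[ν] 0
        filter_upwards [ae_restrict_of_ae (s := Z) (Lp.coeFn_add u v), hu, hv] with x h1 h2 h3
        simp only [h1, Pi.add_apply, h2, h3, Pi.zero_apply, add_zero]
      zero_mem' := by
        show ((0 : L2T) : UnitCircle → ℂ) =ᵐ[ν] 0
        exact ae_restrict_of_ae (s := Z) (Lp.coeFn_zero ℂ 2 muT)
      smul_mem' := by
        intro c u hu
        show ((c • u : L2T) : UnitCircle → ℂ) =ᵐ[ν] 0
        filter_upwards [ae_restrict_of_ae (s := Z) (Lp.coeFn_smul c u), hu] with x h1 h2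
        simp only [h1, Pi.smul_apply, h2, Pi.zero_apply, smul_zero] } with hVdef
  have hVclosed : IsClosed (V : Set L2T) := by
    refine isClosed_of_closure_subset fun u hu => ?_
    show (u : UnitCircle → ℂ) =ᵐ[ν] 0
    have key : eLpNorm (u : UnitCircle → ℂ) 2 ν = 0 := by
      rw [← le_zero_iff]
      refine ENNReal.le_of_forall_pos_le_add fun ε hε _ => ?_
      obtain ⟨v, hvV, hvd⟩ := EMetric.mem_closure_iff.mp hu (ε : ℝ≥0∞)
        (by exact_mod_cast hε)
      have hvV' : (v : UnitCircle → ℂ) =ᵐ[ν] 0 := hvV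
      have hdecomp : (u : UnitCircle → ℂ) =ᵐ[ν]
          fun x => ((u - v : L2T) : UnitCircle → ℂ) x + (v : UnitCircle → ℂ) x := by
        filter_upwards [ae_restrict_of_ae (s := Z) (Lp.coeFn_sub u v)] with x hx
        rw [hx]
        simp
      rw [eLpNorm_congr_ae hdecomp]
      refine le_trans (eLpNorm_add_le ((Lp.aestronglyMeasurable (u - v)).restrict)
        ((Lp.aestronglyMeasurable v).restrict) one_le_two) ?_
      rw [eLpNorm_congr_ae hvV', eLpNorm_zero, add_zero, zero_add]
      refine le_trans (eLpNorm_mono_measure _ Measure.restrict_le_self) ?_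
      rw [eLpNorm_congr_ae (Lp.coeFn_sub u v), ← Lp.edist_def]
      exact le_of_lt hvd
    exact (eLpNorm_eq_zero_iff ((Lp.aestronglyMeasurable u).restrict) (by norm_num)).mp key
  have hspan : (Submodule.span ℂ
      {u : L2T | ∃ n : ℕ, (u : UnitCircle → ℂ) =ᵐ[muT] fun x => zf x ^ n * O x}) ≤ V := by
    rw [Submodule.span_le]
    rintro u ⟨n, hn⟩
    show (u : UnitCircle → ℂ) =ᵐ[ν] 0
    filter_upwards [ae_restrict_of_ae (s := Z) hn, ae_restrict_of_ae (s := Z) hOeq,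
      ae_restrict_mem hZ] with x h1 h2 h3
    rw [h1, h2, show O' x = 0 from h3, mul_zero]
    rfl
  have hH2V : H2 ⊆ (V : Set L2T) := by
    rw [← hO.2]
    exact closure_minimal hspan hVclosed
  have h1mem : (memLp_const (μ := muT) (p := 2) (1:ℂ)).toLp _ ∈ H2 := by
    intro n hn
    rw [fourierCoeff_congr_ae (MemLp.coeFn_toLp _), fourierCoeff_const]
    exact if_neg (by omega)
  have h1V := hH2V h1mem
  have h1ae : ∀ᵐ _x ∂ν, False := by
    have h1V' : ((memLp_const (μ := muT) (p := 2) (1:ℂ)).toLp _ : UnitCircle → ℂ) =ᵐ[ν] 0 := h1V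
    filter_upwards [ae_restrict_of_ae (s := Z) (MemLp.coeFn_toLp
      (memLp_const (μ := muT) (p := 2) (1:ℂ))), h1V'] with x ha hb
    rw [ha] at hb
    exact one_ne_zero hb
  have h2 : ∀ᵐ x ∂muT, x ∈ Z → False := (ae_restrict_iff' hZ).mp h1ae
  filter_upwards [h2, hOeq] with x hx hOx h0
  exact hx (show O' x = 0 by rw [← hOx]; exact h0)



lemma fourierCoeff_w {l : ℂ} (hl : ‖l‖ < 1) (m : ℤ) :
    fourierCoeff (fun x => (zf x - l)⁻¹) m = if m < 0 then l ^ (-m-1).toNat else 0 := by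
  have hrw : ∀ x : UnitCircle, (zf x - l)⁻¹ = conj (zf x * (1 - conj l * zf x)⁻¹) := by
    intro x
    rw [map_mul, map_inv₀, map_sub, map_one, map_mul, Complex.conj_conj]
    have hz : conj (zf x) * zf x = 1 := by rw [mul_comm]; exact zf_mul_conj x
    have h1 : 1 - l * conj (zf x) = conj (zf x) * (zf x - l) := by
      rw [mul_sub, hz]; ring
    rw [h1, mul_inv]
    have hzne : conj (zf x) ≠ 0 := by
      intro h; rw [h, zero_mul] at hz; exact zero_ne_one hz
    rw [← mul_assoc, mul_inv_cancel₀ hzne, one_mul]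
  calc fourierCoeff (fun x => (zf x - l)⁻¹) m
      = fourierCoeff (fun x => conj (zf x * (1 - conj l * zf x)⁻¹)) m :=
        fourierCoeff_congr_ae (Filter.Eventually.of_forall fun x => hrw x) m
    _ = conj (fourierCoeff (fun x => zf x * (1 - conj l * zf x)⁻¹) (-m)) :=
        fourierCoeff_conj _ m
    _ = conj (fourierCoeff (fun x => (1 - conj l * zf x)⁻¹) (-m - 1)) := by
        rw [fourierCoeff_zf_mul]
    _ = if m < 0 then l ^ (-m-1).toNat else 0 := by
        rw [fourierCoeff_geom (by rwa [RCLike.norm_conj]) (-m-1)]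
        by_cases hm : m < 0
        · rw [if_pos (by omega), if_pos hm, ← map_pow, Complex.conj_conj]
        · rw [if_neg (by omega), if_neg hm, map_zero]

lemma norm_fourierCoeff_le_one {α : UnitCircle → ℂ} (hint : Integrable α muT)
    (hαn : ∀ᵐ x ∂muT, ‖α x‖ = 1) (k : ℤ) : ‖fourierCoeff α k‖ ≤ 1 := by
  unfold fourierCoeff
  refine le_trans (norm_integral_le_integral_norm _) ?_
  have hb : ∀ᵐ x ∂muT, ‖fourier (-k) x • α x‖ ≤ 1 := by
    filter_upwards [hαn] with x hx
    rw [norm_smul, hx, show ‖fourier (-k) x‖ = 1 from Circle.norm_coe _, mul_one]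
  have hi : Integrable (fun x => ‖fourier (-k) x • α x‖) muT := by
    have : Integrable (fun x => fourier (-k) x * α x) muT := integrable_fourier_smul hint (-k)
    exact this.norm
  calc ∫ x, ‖fourier (-k) x • α x‖ ∂muT ≤ ∫ _x, (1:ℝ) ∂muT :=
        integral_mono_ae hi (integrable_const 1) hb
    _ = 1 := by simp [measure_univ]

lemma memLp2_of_bound {f : UnitCircle → ℂ} (hm : AEStronglyMeasurable f muT) (C : ℝ)
    (h : ∀ᵐ x ∂muT, ‖f x‖ ≤ C) : MemLp f 2 muT :=
  MemLp.mono_exponent (memLp_top_of_bound hm C h) le_top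

lemma memLp2_mul_of_bdd {f g : UnitCircle → ℂ} (hf : MemLp f 2 muT)
    (hg : AEStronglyMeasurable g muT) {C : ℝ} (hC : ∀ᵐ x ∂muT, ‖g x‖ ≤ C) :
    MemLp (fun x => f x * g x) 2 muT := by
  refine MemLp.of_le_mul (c := C) hf (hf.1.mul hg) ?_
  filter_upwards [hC] with x hx
  rw [norm_mul, mul_comm (‖f x‖)]
  exact mul_le_mul_of_nonneg_right hx (norm_nonneg _)

section KernelCoeffs
variable {α : UnitCircle → ℂ} {l : ℂ}

set_option maxHeartbeats 1000000 in
lemma fourierCoeff_ktFun_neg (hα2 : MemLp α 2 muT)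
    (hαcoeff : ∀ n : ℤ, n < 0 → fourierCoeff α n = 0)
    (hαn : ∀ᵐ x ∂muT, ‖α x‖ = 1) (hl : ‖l‖ < 1) :
    ∀ n : ℤ, n < 0 → fourierCoeff (ktFun α l) n = 0 := by
  intro n hn
  set c := diskValue α l with hcdef
  set A : UnitCircle → ℂ := fun x => α x - c with hAdef
  set w : UnitCircle → ℂ := fun x => (zf x - l)⁻¹ with hwdef
  have hA2 : MemLp A 2 muT := hα2.sub (memLp_const c)
  have hαint : Integrable α muT := hα2.integrable one_le_two
  have hAcoeff : ∀ k : ℤ, fourierCoeff A k = fourierCoeff α k - if k = 0 then c else 0 :=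
    fun k => by rw [hAdef, fourierCoeff_sub hαint (integrable_const c), fourierCoeff_const]
  have hwcont : Continuous w := by
    refine Continuous.inv₀ (zf_continuous.sub continuous_const) fun x => zf_sub_ne hl x
  have hw2 : MemLp w 2 muT := memLp2_of_bound hwcont.aestronglyMeasurable ((1 - ‖l‖)⁻¹)
    (Filter.Eventually.of_forall fun x =>
      norm_inv_le_of_le (by linarith) (norm_zf_sub l x))
  have hkteq : ktFun α l = fun x => w x * A x :=
    funext fun x => (div_eq_mul_inv _ _).trans (mul_comm _ _)
  rw [hkteq, fourierCoeff_mul A w hA2 hw2 n]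
  have hbd : ∀ k : ℤ, ‖fourierCoeff α k‖ ≤ 1 := norm_fourierCoeff_le_one hαint hαn
  set p := (-n-1).toNat with hpdef
  have hterm : ∀ k : ℤ, fourierCoeff w (n - k) * fourierCoeff A k
      = l ^ p * (l ^ k.toNat * fourierCoeff A k) := by
    intro k
    by_cases hk : k < 0
    · rw [hAcoeff k, hαcoeff k hk, if_neg (by omega), sub_zero, mul_zero, mul_zero, mul_zero]
    · rw [hwdef, fourierCoeff_w hl (n - k), if_pos (by omega)]
      rw [show (-(n-k)-1).toNat = p + k.toNat by omega, pow_add]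
      ring
  rw [tsum_congr hterm, tsum_mul_left]
  have hneg : ∀ j : ℕ, l ^ ((-(j+1) : ℤ)).toNat * fourierCoeff A (-(j+1) : ℤ) = 0 := by
    intro j
    rw [hAcoeff, hαcoeff _ (by omega), if_neg (by omega), sub_zero, mul_zero]
  have hAbd : ∀ j : ℕ, ‖fourierCoeff A (j:ℤ)‖ ≤ 1 + ‖c‖ := by
    intro j
    rw [hAcoeff]
    refine le_trans (norm_sub_le _ _) ?_
    have h1 : ‖(if ((j:ℤ)) = 0 then c else 0 : ℂ)‖ ≤ ‖c‖ := by
      by_cases hj : ((j:ℤ)) = 0 <;> simp [hj] <;> simp [show j ≠ 0 by omega]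
    exact add_le_add (hbd _) h1
  have hSnat : Summable (fun j : ℕ => l ^ ((j:ℤ)).toNat * fourierCoeff A (j:ℤ)) := by
    refine Summable.of_norm_bounded (g := fun j => (1 + ‖c‖) * ‖l‖ ^ j)
      (Summable.mul_left _ (summable_geometric_of_lt_one (norm_nonneg l) hl)) fun j => ?_
    rw [norm_mul, norm_pow, Int.toNat_natCast, mul_comm]
    exact mul_le_mul_of_nonneg_right (hAbd j) (pow_nonneg (norm_nonneg l) j)
  have hSneg : Summable (fun j : ℕ => l ^ ((-(j+1) : ℤ)).toNat * fourierCoeff A (-(j+1) : ℤ)) :=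
    summable_zero.congr fun j => (hneg j).symm
  rw [tsum_of_nat_of_neg_add_one hSnat hSneg]
  have h2nd : ∑' j : ℕ, l ^ ((-(j+1) : ℤ)).toNat * fourierCoeff A (-(j+1) : ℤ) = 0 := by
    simp_rw [hneg, tsum_zero]
  rw [h2nd, add_zero]
  have hsplit : ∀ j : ℕ, l ^ ((j:ℤ)).toNat * fourierCoeff A (j:ℤ)
      = fourierCoeff α (j:ℤ) * l ^ j - (if j = 0 then c else 0) := by
    intro j
    rw [hAcoeff, Int.toNat_natCast]
    by_cases hj : j = 0
    · subst hj; simp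
    · rw [if_neg (by exact_mod_cast hj), if_neg hj, sub_zero, sub_zero]; ring
  rw [tsum_congr hsplit]
  have hS1 : Summable (fun j : ℕ => fourierCoeff α (j:ℤ) * l ^ j) := by
    refine Summable.of_norm_bounded (g := fun j => 1 * ‖l‖ ^ j)
      (Summable.mul_left _ (summable_geometric_of_lt_one (norm_nonneg l) hl)) fun j => ?_
    rw [norm_mul, norm_pow]
    exact mul_le_mul_of_nonneg_right (hbd _) (pow_nonneg (norm_nonneg l) j)
  have hS2 : Summable (fun j : ℕ => (if j = 0 then c else 0 : ℂ)) := by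
    refine summable_of_ne_finset_zero (s := {0}) fun j hj => ?_
    rw [if_neg (by simpa using hj)]
  rw [hS1.tsum_sub hS2, tsum_ite_eq]
  rw [show ∑' j : ℕ, fourierCoeff α (j:ℤ) * l ^ j = c from rfl, sub_self, mul_zero]

lemma fourierCoeff_kFun_neg (hα2 : MemLp α 2 muT)
    (hαcoeff : ∀ n : ℤ, n < 0 → fourierCoeff α n = 0) (hl : ‖l‖ < 1) :
    ∀ n : ℤ, n < 0 → fourierCoeff (kFun α l) n = 0 := by
  intro n hn
  set c := diskValue α l with hcdef
  set B : UnitCircle → ℂ := fun x => 1 - conj c * α x with hBdef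
  set S : UnitCircle → ℂ := fun x => (1 - conj l * zf x)⁻¹ with hSdef
  have hB2 : MemLp B 2 muT := (memLp_const 1).sub (hα2.const_mul _)
  have hαint : Integrable α muT := hα2.integrable one_le_two
  have hBcoeff : ∀ k : ℤ, fourierCoeff B k
      = (if k = 0 then 1 else 0) - conj c * fourierCoeff α k := fun k => by
    rw [hBdef, fourierCoeff_sub (integrable_const 1) (hαint.const_mul _),
      fourierCoeff_const, fourierCoeff.const_mul]
  have hScont : Continuous S := by
    refine Continuous.inv₀ (continuous_const.sub (continuous_const.mul zf_continuous))
      fun x => one_sub_mul_zf_ne (by rwa [RCLike.norm_conj]) x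
  have hS2 : MemLp S 2 muT := memLp2_of_bound hScont.aestronglyMeasurable ((1 - ‖l‖)⁻¹)
    (Filter.Eventually.of_forall fun x => by
      have := norm_one_sub_mul_zf (conj l) x
      rw [RCLike.norm_conj] at this
      exact norm_inv_le_of_le (by linarith) this)
  have hkeq : kFun α l = fun x => S x * B x :=
    funext fun x => (div_eq_mul_inv _ _).trans (mul_comm _ _)
  rw [hkeq, fourierCoeff_mul B S hB2 hS2 n]
  refine (tsum_congr fun k => ?_).trans tsum_zero
  by_cases hk : k < 0
  · rw [hBcoeff k, hαcoeff k hk, if_neg (by omega), mul_zero, sub_zero, mul_zero]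
  · rw [hSdef, fourierCoeff_geom (by rwa [RCLike.norm_conj]) (n - k), if_neg (by omega), zero_mul]

end KernelCoeffs



section KernelBounds
variable {α : UnitCircle → ℂ} {l : ℂ}

lemma kFun_bound (hαe : ∀ᵐ x ∂muT, ‖α x‖ = 1) (hl : ‖l‖ < 1) :
    ∀ᵐ x ∂muT, ‖kFun α l x‖ ≤ (1 + ‖diskValue α l‖) * (1 - ‖l‖)⁻¹ := by
  filter_upwards [hαe] with x hx
  unfold kFun
  rw [div_eq_mul_inv, norm_mul]
  have h2 : ‖(1 - conj l * zf x)⁻¹‖ ≤ (1 - ‖l‖)⁻¹ := by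
    refine norm_inv_le_of_le (by linarith) ?_
    have := norm_one_sub_mul_zf (conj l) x
    rwa [RCLike.norm_conj] at this
  have h1 : ‖1 - conj (diskValue α l) * α x‖ ≤ 1 + ‖diskValue α l‖ := by
    refine le_trans (norm_sub_le _ _) ?_
    rw [norm_one, norm_mul, RCLike.norm_conj, hx, mul_one]
  exact mul_le_mul h1 h2 (norm_nonneg _) (by positivity)

lemma kFun_meas (hαm : AEStronglyMeasurable α muT) (hl : ‖l‖ < 1) :
    AEStronglyMeasurable (kFun α l) muT := by
  have hScont : Continuous (fun x : UnitCircle => (1 - conj l * zf x)⁻¹) :=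
    Continuous.inv₀ (continuous_const.sub (continuous_const.mul zf_continuous))
      fun x => one_sub_mul_zf_ne (by rwa [RCLike.norm_conj]) x
  have heq : kFun α l
      = fun x => (1 - conj (diskValue α l) * α x) * (1 - conj l * zf x)⁻¹ :=
    funext fun x => div_eq_mul_inv _ _
  rw [heq]
  exact (aestronglyMeasurable_const.sub (hαm.const_mul _)).mul hScont.aestronglyMeasurable

lemma ktFun_bound (hαe : ∀ᵐ x ∂muT, ‖α x‖ = 1) (hl : ‖l‖ < 1) :
    ∀ᵐ x ∂muT, ‖ktFun α l x‖ ≤ (1 + ‖diskValue α l‖) * (1 - ‖l‖)⁻¹ := by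
  filter_upwards [hαe] with x hx
  unfold ktFun
  rw [div_eq_mul_inv, norm_mul]
  have h2 : ‖(zf x - l)⁻¹‖ ≤ (1 - ‖l‖)⁻¹ :=
    norm_inv_le_of_le (by linarith) (norm_zf_sub l x)
  have h1 : ‖α x - diskValue α l‖ ≤ 1 + ‖diskValue α l‖ := by
    refine le_trans (norm_sub_le _ _) ?_
    rw [hx]
  exact mul_le_mul h1 h2 (norm_nonneg _) (by positivity)

lemma ktFun_meas (hαm : AEStronglyMeasurable α muT) (hl : ‖l‖ < 1) :
    AEStronglyMeasurable (ktFun α l) muT := by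
  have hwcont : Continuous (fun x : UnitCircle => (zf x - l)⁻¹) :=
    Continuous.inv₀ (zf_continuous.sub continuous_const) fun x => zf_sub_ne hl x
  have heq : ktFun α l = fun x => (α x - diskValue α l) * (zf x - l)⁻¹ :=
    funext fun x => div_eq_mul_inv _ _
  rw [heq]
  exact (hαm.sub aestronglyMeasurable_const).mul hwcont.aestronglyMeasurable

end KernelBounds

/-- If `g = conj(𝒪) conj(α) O⁻¹` a.e. (`α` inner, `O, 𝒪` outer), then for every
`λ ∈ 𝔻`, both `O k_λ^α` and `O k̃_λ^α` belong to `ker T_g`. -/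
theorem mem_kerT_of_factorisation
    (g α O Oo : UnitCircle → ℂ) (hg : MemLp g ⊤ muT)
    (hα : IsInner α) (hO : IsOuter O) (hOo : IsOuter Oo)
    (hfac : g =ᵐ[muT] fun x => conj (Oo x) * conj (α x) * (O x)⁻¹)
    (l : ℂ) (hl : ‖l‖ < 1) :
    InKerT g (fun x => O x * kFun α l x) ∧
    InKerT g (fun x => O x * ktFun α l x) := by
  obtain ⟨⟨hα2, hαcoeff⟩, hαe⟩ := hα
  have hαm : AEStronglyMeasurable α muT := hα2.aestronglyMeasurable
  have hO2 := hO.1.1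
  have hOcoeff := hO.1.2
  have hOo2 := hOo.1.1
  have hOocoeff := hOo.1.2
  have hO0 : ∀ᵐ x ∂muT, O x ≠ 0 := outer_ne_zero hO
  set C : ℝ := (1 + ‖diskValue α l‖) * (1 - ‖l‖)⁻¹ with hCdef
  -- membership facts for the kernels
  have hkF2 : MemLp (kFun α l) 2 muT :=
    memLp2_of_bound (kFun_meas hαm hl) C (kFun_bound hαe hl)
  have hkt2 : MemLp (ktFun α l) 2 muT :=
    memLp2_of_bound (ktFun_meas hαm hl) C (ktFun_bound hαe hl)
  have hkFcoeff := fourierCoeff_kFun_neg hα2 hαcoeff hl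
  have hktcoeff := fourierCoeff_ktFun_neg hα2 hαcoeff hαe hl
  have hOkF2 : MemLp (fun x => O x * kFun α l x) 2 muT :=
    memLp2_mul_of_bdd hO2 (kFun_meas hαm hl) (kFun_bound hαe hl)
  have hOkt2 : MemLp (fun x => O x * ktFun α l x) 2 muT :=
    memLp2_mul_of_bdd hO2 (ktFun_meas hαm hl) (ktFun_bound hαe hl)
  have hOkFcoeff : ∀ n : ℤ, n < 0 → fourierCoeff (fun x => O x * kFun α l x) n = 0 :=
    fun n hn => fourierCoeff_mul_neg hO2 hkF2 hOcoeff hkFcoeff hn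
  have hOktcoeff : ∀ n : ℤ, n < 0 → fourierCoeff (fun x => O x * ktFun α l x) n = 0 :=
    fun n hn => fourierCoeff_mul_neg hO2 hkt2 hOcoeff hktcoeff hn
  have hOokF2 : MemLp (fun x => Oo x * kFun α l x) 2 muT :=
    memLp2_mul_of_bdd hOo2 (kFun_meas hαm hl) (kFun_bound hαe hl)
  have hOokt2 : MemLp (fun x => Oo x * ktFun α l x) 2 muT :=
    memLp2_mul_of_bdd hOo2 (ktFun_meas hαm hl) (ktFun_bound hαe hl)
  -- a.e. identities
  have hae1 : (fun x => g x * (O x * kFun α l x))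
      =ᵐ[muT] fun x => conj (Oo x * (zf x * ktFun α l x)) := by
    filter_upwards [hfac, hαe, hO0] with x hgx hαx hOx
    have hαc : conj (α x) * α x = 1 := by
      rw [Complex.conj_mul', hαx]; norm_num
    have hzc : zf x * conj (zf x) = 1 := zf_mul_conj x
    have hd1 : (1 : ℂ) - conj l * zf x ≠ 0 := one_sub_mul_zf_ne (by rwa [RCLike.norm_conj]) x
    have hd2 : zf x - l ≠ 0 := zf_sub_ne hl x
    have hd2' : conj (zf x) - conj l ≠ 0 := by
      rw [← map_sub]
      exact (map_ne_zero (starRingEnd ℂ)).mpr hd2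
    rw [hgx]
    show conj (Oo x) * conj (α x) * (O x)⁻¹
        * (O x * ((1 - conj (diskValue α l) * α x) / (1 - conj l * zf x)))
      = conj (Oo x * (zf x * ((α x - diskValue α l) / (zf x - l))))
    simp only [map_mul, map_div₀, map_sub]
    field_simp
    linear_combination (conj (Oo x) * conj (diskValue α l) * (conj l - conj (zf x))) * hαc
      + (conj (Oo x) * conj (α x) * conj l
        - conj (Oo x) * conj (diskValue α l) * conj l) * hzc
  have hae2 : (fun x => g x * (O x * ktFun α l x))
      =ᵐ[muT] fun x => conj (Oo x * (zf x * kFun α l x)) := by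
    filter_upwards [hfac, hαe, hO0] with x hgx hαx hOx
    have hαc : conj (α x) * α x = 1 := by
      rw [Complex.conj_mul', hαx]; norm_num
    have hzc : zf x * conj (zf x) = 1 := zf_mul_conj x
    have hd1 : (1 : ℂ) - conj l * zf x ≠ 0 := one_sub_mul_zf_ne (by rwa [RCLike.norm_conj]) x
    have hd2 : zf x - l ≠ 0 := zf_sub_ne hl x
    have hd1' : (1 : ℂ) - l * conj (zf x) ≠ 0 := by
      intro h
      apply hd1
      calc (1:ℂ) - conj l * zf x = conj (1 - l * conj (zf x)) := by simp [map_sub, map_mul]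
      _ = 0 := by rw [h, map_zero]
    rw [hgx]
    show conj (Oo x) * conj (α x) * (O x)⁻¹
        * (O x * ((α x - diskValue α l) / (zf x - l)))
      = conj (Oo x * (zf x * ((1 - conj (diskValue α l) * α x) / (1 - conj l * zf x))))
    simp only [map_mul, map_div₀, map_sub, map_one, Complex.conj_conj]
    field_simp
    linear_combination (conj (Oo x) * (1 - l * conj (zf x))) * hαc
      + (conj (Oo x) * conj (α x) * diskValue α l - conj (Oo x)) * hzc
  -- the vanishing of nonnegative coefficients
  have key : ∀ (F : UnitCircle → ℂ), MemLp F 2 muT →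
      (∀ n : ℤ, n < 0 → fourierCoeff F n = 0) →
      ∀ n : ℤ, 0 ≤ n → fourierCoeff (fun x => conj (Oo x * (zf x * F x))) n = 0 := by
    intro F hF2 hFcoeff n hn
    rw [fourierCoeff_conj]
    have heq : (fun x => Oo x * (zf x * F x)) = fun x => zf x * (Oo x * F x) :=
      funext fun x => mul_left_comm _ _ _
    rw [heq, fourierCoeff_zf_mul]
    rw [fourierCoeff_mul_neg hOo2 hF2 hOocoeff hFcoeff (by omega), map_zero]
  refine ⟨⟨⟨hOkF2, hOkFcoeff⟩, fun n hn => ?_⟩, ⟨⟨hOkt2, hOktcoeff⟩, fun n hn => ?_⟩⟩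
  · rw [fourierCoeff_congr_ae hae1 n]
    exact key (ktFun α l) hkt2 hktcoeff n hn
  · rw [fourierCoeff_congr_ae hae2 n]
    exact key (kFun α l) hkF2 hkFcoeff n hn


end ToeplitzKernels
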